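/- In ℚ[[t]] one has Σ_{m≥0} N₁(m) t^m = Σ_{m≥0} N₂(m) t^m = (1+t)(1−t)^{−2} + 36·t(1+t)(1−t)^{−4}, where N₁(m) = #{(v₁,v₂,v₃,v₄) ∈ ℕ⁴ : v₁+v₂+v₃+3v₄ = 6m} and N₂(m) = #{(v₁,v₂,v₃,v₄) ∈ ℕ⁴ : v₁+v₂+4v₃+6v₄ = 12m}. (The right-hand side is the Hilbert series P_{g,B} with genus g = 37 and empty basket B; the left-hand sides are the anticanonical Hilbert series of the weighted projective spaces ℙ(1,1,1,3) and ℙ(1,1,4,6), which realise the maximal genus 37.) -/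

import Mathlib

open PowerSeries

/-- A quotient pair `(r,a)`: `r ≥ 2`, `1 ≤ a ≤ r-1`, `gcd(a,r) = 1`. -/
def IsQuotientPair (p : ℕ × ℕ) : Prop :=
  2 ≤ p.1 ∧ 1 ≤ p.2 ∧ p.2 ≤ p.1 - 1 ∧ Nat.gcd p.2 p.1 = 1

/-- A normalized quotient pair additionally satisfies `2a ≤ r`. -/
def IsNormalizedPair (p : ℕ × ℕ) : Prop :=
  IsQuotientPair p ∧ 2 * p.2 ≤ p.1

/-- A basket is a finite multiset of normalized quotient pairs. -/
def IsBasket (B : Multiset (ℕ × ℕ)) : Prop :=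
  ∀ p ∈ B, IsNormalizedPair p

/-- `bInv (r,a)` is the unique `b` with `1 ≤ b ≤ r-1` and `a·b ≡ 1 (mod r)`,
realised as the value of the inverse of `a` in `ZMod r`. -/
def bInv (p : ℕ × ℕ) : ℕ := ((p.2 : ZMod p.1)⁻¹).val

/-- `σ(r,a) = r - 1/r`. -/
def sigmaP (p : ℕ × ℕ) : ℚ := (p.1 : ℚ) - 1 / (p.1 : ℚ)

/-- `δ(r,a) = b(r-b)/r` where `b = bInv (r,a)`. -/
def deltaP (p : ℕ × ℕ) : ℚ :=
  (bInv p : ℚ) * ((p.1 : ℚ) - (bInv p : ℚ)) / (p.1 : ℚ)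

/-- `σ(B)`: sum of `σ` over the basket, with multiplicity. -/
def sigmaB (B : Multiset (ℕ × ℕ)) : ℚ := (B.map sigmaP).sum

/-- `δ(B)`: sum of `δ` over the basket, with multiplicity. -/
def deltaB (B : Multiset (ℕ × ℕ)) : ℚ := (B.map deltaP).sum

/-- `g_min(B) = max(-2, ⌊(2 - δ(B))/2⌋ + 1)`. -/
def gmin (B : Multiset (ℕ × ℕ)) : ℤ := max (-2) (⌊(2 - deltaB B) / 2⌋ + 1)

/-- `g_max(B,κ) = ⌊(2 - δ(B) + κ(24 - σ(B)))/2⌋`. -/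
def gmax (B : Multiset (ℕ × ℕ)) (κ : ℚ) : ℤ :=
  ⌊(2 - deltaB B + κ * (24 - sigmaB B)) / 2⌋

/-- `L_κ`: pairs `(g,B)` of an integer and a basket with `σ(B) < 24` and
`g_min(B) ≤ g ≤ g_max(B,κ)`. -/
def Lset (κ : ℚ) : Set (ℤ × Multiset (ℕ × ℕ)) :=
  {gB | IsBasket gB.2 ∧ sigmaB gB.2 < 24 ∧ gmin gB.2 ≤ gB.1 ∧ gB.1 ≤ gmax gB.2 κ}

/-- The orbifold contribution `Q_{(r,a)}` to the Hilbert series. -/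
noncomputable def Qps (p : ℕ × ℕ) : PowerSeries ℚ :=
  PowerSeries.C (R := ℚ) (1 / (2 * (p.1 : ℚ))) *
    (∑ i ∈ Finset.Icc 1 (p.1 - 1),
      PowerSeries.C (R := ℚ) ((((bInv p * i) % p.1 : ℕ) : ℚ) *
        ((p.1 : ℚ) - (((bInv p * i) % p.1 : ℕ) : ℚ))) * (X : PowerSeries ℚ) ^ i) *
    (1 - X)⁻¹ * (1 - X ^ p.1)⁻¹

/-- The Hilbert series `P_{g,B}` of a genus–basket pair. -/
noncomputable def Pgb (g : ℤ) (B : Multiset (ℕ × ℕ)) : PowerSeries ℚ :=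
  (1 + X) * ((1 - X)⁻¹) ^ 2
    + PowerSeries.C (R := ℚ) ((2 * (g : ℚ) - 2 + deltaB B) / 2) *
        (X * (1 + X) * ((1 - X)⁻¹) ^ 4)
    - (B.map Qps).sum

/-- A pair `(g,B)` is degenerate if the coefficients of `P_{g,B}` begin
`1,1,1,0,…` or `1,1,1,1,1,0,…`. -/
def Degenerate (g : ℤ) (B : Multiset (ℕ × ℕ)) : Prop :=
  (coeff 1 (Pgb g B) = 1 ∧ coeff 2 (Pgb g B) = 1 ∧ coeff 3 (Pgb g B) = 0) ∨
  (coeff 1 (Pgb g B) = 1 ∧ coeff 2 (Pgb g B) = 1 ∧ coeff 3 (Pgb g B) = 1 ∧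
   coeff 4 (Pgb g B) = 1 ∧ coeff 5 (Pgb g B) = 0)

namespace G37

open Finset

/-- `Hs w K = ∑_{c<K} (K - w*c)` (truncated subtraction). -/
def Hs (w K : ℕ) : ℕ := ∑ c ∈ range K, (K - w * c)

lemma Hs_zero (w : ℕ) : Hs w 0 = 0 := by simp [Hs]

lemma Hs_pad (w K n : ℕ) (hw : 1 ≤ w) (h : K ≤ w * n) :
    ∑ c ∈ range n, (K - w * c) = Hs w K := by
  unfold Hs
  have h1 : ∑ c ∈ range n, (K - w*c) = ∑ c ∈ range (n + K), (K - w*c) := by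
    apply Finset.sum_subset (Finset.range_subset_range.2 (Nat.le_add_right _ _))
    intro c _ hcn
    simp only [mem_range, not_lt] at hcn
    have : K ≤ w * c := le_trans h (Nat.mul_le_mul_left w hcn)
    omega
  have h2 : ∑ c ∈ range K, (K - w*c) = ∑ c ∈ range (n + K), (K - w*c) := by
    apply Finset.sum_subset (Finset.range_subset_range.2 (Nat.le_add_left _ _))
    intro c _ hcn
    simp only [mem_range, not_lt] at hcn
    have : K ≤ w * c := le_trans hcn (Nat.le_mul_of_pos_left _ hw)
    omega
  rw [h1, ← h2]

lemma Hs_one_succ (n : ℕ) : Hs 1 (n+1) = Hs 1 n + (n+1) := by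
  unfold Hs
  have hpt : ∀ c, (n+1) - 1*c = (n - 1*c) + (if c ≤ n then 1 else 0) := by
    intro c; split_ifs <;> omega
  rw [Finset.sum_congr rfl fun c _ => hpt c, Finset.sum_add_distrib,
    Finset.sum_range_succ (fun c => n - 1*c)]
  have h0 : n - 1*n = 0 := by omega
  rw [h0, add_zero]
  congr 1
  rw [Finset.sum_congr rfl (fun c hc => if_pos (by simp only [mem_range] at hc; omega)),
    Finset.sum_const, Finset.card_range, smul_eq_mul, mul_one]

lemma two_Hs_one (n : ℕ) : 2 * Hs 1 n = n * (n + 1) := by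
  induction n with
  | zero => simp [Hs]
  | succ n ih => rw [Hs_one_succ, Nat.mul_add, ih]; ring

lemma Hs_four_succ (n : ℕ) : Hs 4 (n+1) = Hs 4 n + (n/4 + 1) := by
  unfold Hs
  have hpt : ∀ c, (n+1) - 4*c = (n - 4*c) + (if 4*c ≤ n then 1 else 0) := by
    intro c; split_ifs <;> omega
  rw [Finset.sum_congr rfl fun c _ => hpt c, Finset.sum_add_distrib,
    Finset.sum_range_succ (fun c => n - 4*c)]
  have h0 : n - 4*n = 0 := by omega
  rw [h0, add_zero]
  congr 1
  rw [← Finset.card_filter]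
  have : (range (n+1)).filter (fun c => 4*c ≤ n) = range (n/4 + 1) := by
    ext c; simp only [mem_filter, mem_range]; omega
  rw [this, Finset.card_range]

lemma two_Hs_four (e : ℕ) : 2 * Hs 4 (6*e+1) = (3*e+1) * (3*e+2) := by
  induction e with
  | zero => simp [Hs]
  | succ e ih =>
    have step : Hs 4 (6*e+1+6) = Hs 4 (6*e+1) +
        ((6*e+1)/4 + (6*e+2)/4 + (6*e+3)/4 + (6*e+4)/4 + (6*e+5)/4 + (6*e+6)/4) + 6 := by
      have h0 := Hs_four_succ (6*e+1); rw [show 6*e+1+1 = 6*e+2 from by ring] at h0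
      have h1 := Hs_four_succ (6*e+2); rw [show 6*e+2+1 = 6*e+3 from by ring] at h1
      have h2 := Hs_four_succ (6*e+3); rw [show 6*e+3+1 = 6*e+4 from by ring] at h2
      have h3 := Hs_four_succ (6*e+4); rw [show 6*e+4+1 = 6*e+5 from by ring] at h3
      have h4 := Hs_four_succ (6*e+5); rw [show 6*e+5+1 = 6*e+6 from by ring] at h4
      have h5 := Hs_four_succ (6*e+6); rw [show 6*e+6+1 = 6*e+1+6 from by ring] at h5
      omega
    have hD : (6*e+1)/4 + (6*e+2)/4 + (6*e+3)/4 + (6*e+4)/4 + (6*e+5)/4 + (6*e+6)/4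
        = 9*e+3 := by omega
    have h6 : 6*(e+1)+1 = 6*e+1+6 := by ring
    rw [h6, step, hD, Nat.mul_add, Nat.mul_add, ih]
    ring




lemma L1 (M K : ℕ) : ∑ a ∈ range (M+1), (if a + K = M then 1 else 0) = if K ≤ M then 1 else 0 := by
  rw [← Finset.card_filter]
  by_cases h : K ≤ M
  · rw [if_pos h]
    have : (range (M+1)).filter (fun a => a + K = M) = {M - K} := by
      ext a; simp only [mem_filter, mem_range, mem_singleton]; omega
    rw [this, Finset.card_singleton]
  · rw [if_neg h]
    have : (range (M+1)).filter (fun a => a + K = M) = ∅ := by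
      ext a; simp only [mem_filter, mem_range, notMem_empty, iff_false]; omega
    rw [this, Finset.card_empty]

lemma L2 (M K : ℕ) : ∑ b ∈ range (M+1), (if b + K ≤ M then 1 else 0) = (M+1) - K := by
  rw [← Finset.card_filter]
  have : (range (M+1)).filter (fun b => b + K ≤ M) = range (M+1-K) := by
    ext b; simp only [mem_filter, mem_range]; omega
  rw [this, Finset.card_range]

lemma card_count (w z M : ℕ) (hw : 1 ≤ w) (hz : 1 ≤ z) :
    Nat.card {v : ℕ × ℕ × ℕ × ℕ // v.1 + v.2.1 + w * v.2.2.1 + z * v.2.2.2 = M}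
      = ∑ d ∈ range (M+1), Hs w ((M+1) - z * d) := by
  have mem_iff : ∀ u : ℕ×ℕ×ℕ×ℕ, u ∈ (range (M+1) ×ˢ range (M+1) ×ˢ range (M+1) ×ˢ range (M+1)).filter
        (fun u => u.2.2.2 + u.2.2.1 + w*u.2.1 + z*u.1 = M)
      ↔ u.2.2.2 + u.2.2.1 + w*u.2.1 + z*u.1 = M := by
    rintro ⟨d, c, b, a⟩
    simp only [Finset.mem_filter, Finset.mem_product, Finset.mem_range]
    constructor
    · tauto
    · intro h
      refine ⟨⟨?_, ?_, ?_, ?_⟩, h⟩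
      · have := Nat.le_mul_of_pos_left d hz; omega
      · have := Nat.le_mul_of_pos_left c hw; omega
      · omega
      · omega
  have e0 : {v : ℕ×ℕ×ℕ×ℕ // v.1 + v.2.1 + w*v.2.2.1 + z*v.2.2.2 = M} ≃
      {u : ℕ×ℕ×ℕ×ℕ // u.2.2.2 + u.2.2.1 + w*u.2.1 + z*u.1 = M} :=
    { toFun := fun v => ⟨(v.1.2.2.2, v.1.2.2.1, v.1.2.1, v.1.1), by
        obtain ⟨⟨a,b,c,d⟩,h⟩ := v; simpa using h⟩
      invFun := fun u => ⟨(u.1.2.2.2, u.1.2.2.1, u.1.2.1, u.1.1), by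
        obtain ⟨⟨d,c,b,a⟩,h⟩ := u; simpa using h⟩
      left_inv := fun ⟨⟨a,b,c,d⟩,h⟩ => rfl
      right_inv := fun ⟨⟨d,c,b,a⟩,h⟩ => rfl }
  rw [Nat.card_congr (e0.trans (Equiv.subtypeEquivRight fun u => (mem_iff u).symm)),
    Nat.card_eq_finsetCard, Finset.card_filter]
  simp only [Finset.sum_product]
  apply Finset.sum_congr rfl
  intro d _
  have inner2 : ∀ c b : ℕ, ∑ a ∈ range (M+1), (if a + b + w*c + z*d = M then 1 else 0)
      = if b + (w*c + z*d) ≤ M then 1 else 0 := by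
    intro c b
    rw [Finset.sum_congr rfl (fun a _ => if_congr (by omega : a + b + w*c + z*d = M ↔ a + (b + (w*c + z*d)) = M) rfl rfl),
      L1 M (b + (w*c + z*d))]
  have inner1 : ∀ c : ℕ, ∑ b ∈ range (M+1), ∑ a ∈ range (M+1),
        (if a + b + w*c + z*d = M then 1 else 0) = (M+1) - (w*c + z*d) := by
    intro c
    rw [Finset.sum_congr rfl (fun b _ => inner2 c b), L2 M (w*c + z*d)]
  rw [Finset.sum_congr rfl (fun c _ => inner1 c)]
  have hsub : ∀ c : ℕ, (M+1) - (w*c + z*d) = ((M+1) - z*d) - w*c := by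
    intro c; rw [Nat.sub_sub, Nat.add_comm (w*c) (z*d)]
  rw [Finset.sum_congr rfl (fun c _ => hsub c)]
  exact Hs_pad w ((M+1) - z*d) (M+1) hw (le_trans (Nat.sub_le _ _) (Nat.le_mul_of_pos_left _ hw))


def F (m : ℕ) : ℕ := (2*m+1) * (6*m*m + 6*m + 1)




lemma sum_F (m : ℕ) : ∑ j ∈ range (2*m+1), (3*j+1)*(3*j+2) = 2 * F m := by
  induction m with
  | zero => simp [F]
  | succ m ih =>
    have h : 2*(m+1)+1 = (2*m+1)+1+1 := by ring
    rw [h, Finset.sum_range_succ, Finset.sum_range_succ, ih, F, F]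
    ring


lemma count_common (w s m : ℕ) (hs : 1 ≤ s)
    (h0 : ∀ d, 2*m < d → (6*s*m+1) - (3*s)*d = 0)
    : ∑ d ∈ range (6*s*m+1), Hs w ((6*s*m+1) - (3*s) * d)
      = ∑ j ∈ range (2*m+1), Hs w (3*s*j+1) := by
  have hshrink : ∑ d ∈ range (6*s*m+1), Hs w ((6*s*m+1) - (3*s) * d)
      = ∑ d ∈ range (2*m+1), Hs w ((6*s*m+1) - (3*s) * d) := by
    refine (Finset.sum_subset (Finset.range_subset_range.2 (by nlinarith)) ?_).symm
    intro d _ hd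
    simp only [mem_range, not_lt] at hd
    rw [h0 d (by omega), Hs_zero]
  rw [hshrink, ← Finset.sum_range_reflect]
  apply Finset.sum_congr rfl
  intro j hj
  simp only [mem_range] at hj
  congr 1
  have hj' : j ≤ 2*m := by omega
  have : 2*m+1-1-j = 2*m - j := by omega
  rw [this]
  have h1 : (3*s)*(2*m-j) = 6*s*m - 3*s*j := by
    rw [Nat.mul_sub]
    ring_nf
  rw [h1]
  have h2 : 3*s*j ≤ 6*s*m := by nlinarith
  omega

lemma count1 (m : ℕ) :
    Nat.card {v : ℕ × ℕ × ℕ × ℕ // v.1 + v.2.1 + v.2.2.1 + 3 * v.2.2.2 = 6 * m} = F m := by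
  have he : Nat.card {v : ℕ × ℕ × ℕ × ℕ // v.1 + v.2.1 + v.2.2.1 + 3 * v.2.2.2 = 6 * m}
      = Nat.card {v : ℕ × ℕ × ℕ × ℕ // v.1 + v.2.1 + 1 * v.2.2.1 + 3 * v.2.2.2 = 6 * m} :=
    Nat.card_congr (Equiv.subtypeEquivRight fun v => by rw [one_mul])
  rw [he, card_count 1 3 (6*m) le_rfl (by omega)]
  have hc := count_common 1 1 m le_rfl (fun d hd => by omega)
  simp only [show 6*1*m = 6*m from by ring, show (3*1 : ℕ) = 3 from rfl] at hc
  rw [hc]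
  have h2 : 2 * ∑ j ∈ range (2*m+1), Hs 1 (3*1*j+1) = 2 * F m := by
    rw [Finset.mul_sum, ← sum_F m]
    apply Finset.sum_congr rfl
    intro j _
    rw [show 3*1*j+1 = 3*j+1 from by ring, two_Hs_one]
  simp only [show ∀ j:ℕ, 3*1*j = 3*j from fun j => by ring] at h2
  omega

lemma count2 (m : ℕ) :
    Nat.card {v : ℕ × ℕ × ℕ × ℕ // v.1 + v.2.1 + 4 * v.2.2.1 + 6 * v.2.2.2 = 12 * m} = F m := by
  rw [card_count 4 6 (12*m) (by omega) (by omega)]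
  have hc := count_common 4 2 m (by omega) (fun d hd => by omega)
  simp only [show 6*2*m = 12*m from by ring, show (3*2 : ℕ) = 6 from rfl] at hc
  rw [hc]
  have h2 : 2 * ∑ j ∈ range (2*m+1), Hs 4 (3*2*j+1) = 2 * F m := by
    rw [Finset.mul_sum, ← sum_F m]
    apply Finset.sum_congr rfl
    intro j _
    rw [show 3*2*j+1 = 6*j+1 from by ring, two_Hs_four]
  simp only [show ∀ j:ℕ, 3*2*j = 6*j from fun j => by ring] at h2
  omega



lemma mkF_eq : (PowerSeries.mk fun m => ((F m : ℕ) : ℚ)) =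
    (1 + X) * ((1 - X)⁻¹) ^ 2 +
      PowerSeries.C (R := ℚ) 36 * (X * (1 + X) * ((1 - X)⁻¹) ^ 4) := by
  have hc : PowerSeries.constantCoeff (1 - X : ℚ⟦X⟧) ≠ 0 := by simp
  have hinv : ((1:ℚ⟦X⟧) - X) * (1 - X)⁻¹ = 1 := PowerSeries.mul_inv_cancel _ hc
  have hne : ((1:ℚ⟦X⟧) - X)^4 ≠ 0 :=
    pow_ne_zero _ (fun h0 => by rw [h0, zero_mul] at hinv; exact zero_ne_one hinv)
  apply mul_right_cancel₀ hne
  have hRHS : ((1 + X) * ((1 - X)⁻¹) ^ 2 +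
      PowerSeries.C (R := ℚ) 36 * (X * (1 + X) * ((1 - X)⁻¹) ^ 4)) * (1-X)^4
      = C (R := ℚ) 1 * X^0 + C (R := ℚ) 35 * X^1 + C (R := ℚ) 35 * X^2 + C (R := ℚ) 1 * X^3 := by
    have h36 : (C (R := ℚ) 36) = (36:ℚ⟦X⟧) := map_ofNat (C (R := ℚ)) _
    have h35 : (C (R := ℚ) 35) = (35:ℚ⟦X⟧) := map_ofNat (C (R := ℚ)) _
    have h1 : (C (R := ℚ) 1) = (1:ℚ⟦X⟧) := map_one _
    rw [h36, h35, h1]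
    linear_combination (((1:ℚ⟦X⟧)+X)*(1-X)^2*((1-X)*(1-X)⁻¹+1)
      + (36:ℚ⟦X⟧)*(X*(1+X))*(((1-X)*(1-X)⁻¹)^2+1)*((1-X)*(1-X)⁻¹+1)) * hinv
  rw [hRHS]
  have hexp : (PowerSeries.mk fun m => ((F m : ℕ) : ℚ)) * ((1:ℚ⟦X⟧) - X)^4
      = (PowerSeries.mk fun m => ((F m:ℕ):ℚ)) * X^0 - C (R := ℚ) 4 * ((PowerSeries.mk fun m => ((F m:ℕ):ℚ)) * X^1)
        + C (R := ℚ) 6 * ((PowerSeries.mk fun m => ((F m:ℕ):ℚ)) * X^2)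
        - C (R := ℚ) 4 * ((PowerSeries.mk fun m => ((F m:ℕ):ℚ)) * X^3)
        + (PowerSeries.mk fun m => ((F m:ℕ):ℚ)) * X^4 := by
    have h4 : (C (R := ℚ) 4) = (4:ℚ⟦X⟧) := map_ofNat (C (R := ℚ)) _
    have h6 : (C (R := ℚ) 6) = (6:ℚ⟦X⟧) := map_ofNat (C (R := ℚ)) _
    rw [h4, h6]; ring
  rw [hexp]
  ext n
  simp only [map_add, map_sub, PowerSeries.coeff_C_mul, PowerSeries.coeff_mul_X_pow',
    PowerSeries.coeff_mk, PowerSeries.coeff_X_pow]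
  rcases n with _|_|_|_|n
  · norm_num [F]
  · norm_num [F]
  · norm_num [F]
  · norm_num [F]
  · have e1 : n+1+1+1+1-1 = n+3 := by omega
    have e2 : n+1+1+1+1-2 = n+2 := by omega
    have e3 : n+1+1+1+1-3 = n+1 := by omega
    have e4 : n+1+1+1+1-4 = n := by omega
    norm_num [e1, e2, e3, e4, F]
    ring

end G37

theorem genus_37_hilbert_series :
    (PowerSeries.mk fun m => ((Nat.card {v : ℕ × ℕ × ℕ × ℕ //
        v.1 + v.2.1 + v.2.2.1 + 3 * v.2.2.2 = 6 * m} : ℕ) : ℚ)) =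
      (1 + X) * ((1 - X)⁻¹) ^ 2 +
        PowerSeries.C (R := ℚ) 36 * (X * (1 + X) * ((1 - X)⁻¹) ^ 4) ∧
    (PowerSeries.mk fun m => ((Nat.card {v : ℕ × ℕ × ℕ × ℕ //
        v.1 + v.2.1 + 4 * v.2.2.1 + 6 * v.2.2.2 = 12 * m} : ℕ) : ℚ)) =
      (1 + X) * ((1 - X)⁻¹) ^ 2 +
        PowerSeries.C (R := ℚ) 36 * (X * (1 + X) * ((1 - X)⁻¹) ^ 4) := by
  constructor
  · rw [show (PowerSeries.mk fun m => ((Nat.card {v : ℕ × ℕ × ℕ × ℕ //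
        v.1 + v.2.1 + v.2.2.1 + 3 * v.2.2.2 = 6 * m} : ℕ) : ℚ))
        = PowerSeries.mk fun m => ((G37.F m : ℕ) : ℚ) from by
      apply PowerSeries.ext; intro n
      simp only [PowerSeries.coeff_mk, G37.count1]]
    exact G37.mkF_eq
  · rw [show (PowerSeries.mk fun m => ((Nat.card {v : ℕ × ℕ × ℕ × ℕ //
        v.1 + v.2.1 + 4 * v.2.2.1 + 6 * v.2.2.2 = 12 * m} : ℕ) : ℚ))
        = PowerSeries.mk fun m => ((G37.F m : ℕ) : ℚ) from by
      apply PowerSeries.ext; intro n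
      simp only [PowerSeries.coeff_mk, G37.count2]]
    exact G37.mkF_eq
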